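/- Let n ≥ 1 be an integer and let H(a,b,c,d,n) = 16a²n⁴ + 64abn⁴ + 256b²n⁴ + 16c²n⁴ + 16d²n⁴ + 8adn³ − 64cdn³ + 8a²n² − 4abn² − 12acn² + 32b²n² + 24c²n² + 24d²n² + 6adn − 8an² − 16cdn + 8cn² + a² − ab − ac + b² + c² + d² − 8dn − 2a + 2c + 2. Then the quadruple (a₀, b₀, c₀, d₀) with a₀ = (8n²+1)(256n⁴+32n²+1)/(6144n⁸+4864n⁶+920n⁴+58n²+1), b₀ = −(512n⁶+32n⁴−12n²−1)/(2(6144n⁸+4864n⁶+920n⁴+58n²+1)), c₀ = −(49152n¹⁰+59392n⁸+17088n⁶+1952n⁴+88n²+1)/(2(98304n¹²+28672n¹⁰−18048n⁸−1568n⁶+472n⁴+50n²+1)), d₀ = −n(32768n⁸+19456n⁶+3328n⁴+196n²+3)/((16n⁴−8n²+1)(6144n⁸+4864n⁶+920n⁴+58n²+1)) satisfies ∂H/∂a = ∂H/∂b = ∂H/∂c = ∂H/∂d = 0 at (a₀, b₀, c₀, d₀), i.e., it solves the linear system: (32a+64b)n⁴ + 8dn³ + (16a−4b−12c−8)n² +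 6dn + 2a − b − c − 2 = 0; (64a+512b)n⁴ + (−4a+64b)n² − a + 2b = 0; 32cn⁴ − 64dn³ + (−12a+48c+8)n² − 16dn − a + 2c + 2 = 0; 32dn⁴ + (8a−64c)n³ + 48dn² + (6a−16c−8)n + 2d = 0. -/

import Mathlib

/-- The quadratic polynomial `H(a,b,c,d,n)` from the diagonal case. -/
def Hdiag (a b c d n : ℝ) : ℝ :=
  16 * a ^ 2 * n ^ 4 + 64 * a * b * n ^ 4 + 256 * b ^ 2 * n ^ 4 + 16 * c ^ 2 * n ^ 4 +
    16 * d ^ 2 * n ^ 4 + 8 * a * d * n ^ 3 - 64 * c * d * n ^ 3 + 8 * a ^ 2 * n ^ 2 -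
    4 * a * b * n ^ 2 - 12 * a * c * n ^ 2 + 32 * b ^ 2 * n ^ 2 + 24 * c ^ 2 * n ^ 2 +
    24 * d ^ 2 * n ^ 2 + 6 * a * d * n - 8 * a * n ^ 2 - 16 * c * d * n + 8 * c * n ^ 2 +
    a ^ 2 - a * b - a * c + b ^ 2 + c ^ 2 + d ^ 2 - 8 * d * n - 2 * a + 2 * c + 2

/-- The critical-point candidate `a₀`. -/
noncomputable def a₀ (n : ℝ) : ℝ :=
  (8 * n ^ 2 + 1) * (256 * n ^ 4 + 32 * n ^ 2 + 1) /
    (6144 * n ^ 8 + 4864 * n ^ 6 + 920 * n ^ 4 + 58 * n ^ 2 + 1)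

/-- The critical-point candidate `b₀`. -/
noncomputable def b₀ (n : ℝ) : ℝ :=
  -(512 * n ^ 6 + 32 * n ^ 4 - 12 * n ^ 2 - 1) /
    (2 * (6144 * n ^ 8 + 4864 * n ^ 6 + 920 * n ^ 4 + 58 * n ^ 2 + 1))

/-- The critical-point candidate `c₀`. -/
noncomputable def c₀ (n : ℝ) : ℝ :=
  -(49152 * n ^ 10 + 59392 * n ^ 8 + 17088 * n ^ 6 + 1952 * n ^ 4 + 88 * n ^ 2 + 1) /
    (2 * (98304 * n ^ 12 + 28672 * n ^ 10 - 18048 * n ^ 8 - 1568 * n ^ 6 +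
      472 * n ^ 4 + 50 * n ^ 2 + 1))

/-- The critical-point candidate `d₀`. -/
noncomputable def d₀ (n : ℝ) : ℝ :=
  -(n * (32768 * n ^ 8 + 19456 * n ^ 6 + 3328 * n ^ 4 + 196 * n ^ 2 + 3)) /
    ((16 * n ^ 4 - 8 * n ^ 2 + 1) *
      (6144 * n ^ 8 + 4864 * n ^ 6 + 920 * n ^ 4 + 58 * n ^ 2 + 1))

/-! `H` is quadratic in each of its four arguments, so its partial derivatives are the four
linear forms of the system, and the candidate point is checked by clearing denominators.
The denominators are `D(n) = 6144n⁸ + 4864n⁶ + 920n⁴ + 58n² + 1 > 0` and, for `c₀` and `d₀`,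
`(4n² - 1)² D(n)`, which vanishes for no integer `n`. -/

theorem hasDerivAt_quadratic (A B C x : ℝ) :
    HasDerivAt (fun t => A * t ^ 2 + B * t + C) (2 * A * x + B) x :=
  ((((hasDerivAt_pow 2 x).const_mul A).add ((hasDerivAt_id' x).const_mul B)).add_const C
    ).congr_deriv (by ring)

theorem deriv_eq_of_eq_quadratic {f : ℝ → ℝ} {A B C : ℝ}
    (hf : ∀ t, f t = A * t ^ 2 + B * t + C) (x : ℝ) : deriv f x = 2 * A * x + B := by
  rw [funext hf]
  exact (hasDerivAt_quadratic A B C x).deriv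

section PartialDerivatives

variable (a b c d n : ℝ)

theorem deriv_Hdiag_a :
    deriv (fun t => Hdiag t b c d n) a =
      (32 * a + 64 * b) * n ^ 4 + 8 * d * n ^ 3 +
        (16 * a - 4 * b - 12 * c - 8) * n ^ 2 + 6 * d * n + 2 * a - b - c - 2 := by
  rw [deriv_eq_of_eq_quadratic (A := 16 * n ^ 4 + 8 * n ^ 2 + 1)
    (B := 64 * b * n ^ 4 + 8 * d * n ^ 3 - (4 * b + 12 * c + 8) * n ^ 2 + 6 * d * n - b - c - 2)
    (C := Hdiag 0 b c d n) (fun t => by simp only [Hdiag]; ring)]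
  ring

theorem deriv_Hdiag_b :
    deriv (fun t => Hdiag a t c d n) b =
      (64 * a + 512 * b) * n ^ 4 + (-4 * a + 64 * b) * n ^ 2 - a + 2 * b := by
  rw [deriv_eq_of_eq_quadratic (A := 256 * n ^ 4 + 32 * n ^ 2 + 1)
    (B := 64 * a * n ^ 4 - 4 * a * n ^ 2 - a)
    (C := Hdiag a 0 c d n) (fun t => by simp only [Hdiag]; ring)]
  ring

theorem deriv_Hdiag_c :
    deriv (fun t => Hdiag a b t d n) c =
      32 * c * n ^ 4 - 64 * d * n ^ 3 + (-12 * a + 48 * c + 8) * n ^ 2 -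
        16 * d * n - a + 2 * c + 2 := by
  rw [deriv_eq_of_eq_quadratic (A := 16 * n ^ 4 + 24 * n ^ 2 + 1)
    (B := -64 * d * n ^ 3 + (8 - 12 * a) * n ^ 2 - 16 * d * n - a + 2)
    (C := Hdiag a b 0 d n) (fun t => by simp only [Hdiag]; ring)]
  ring

theorem deriv_Hdiag_d :
    deriv (fun t => Hdiag a b c t n) d =
      32 * d * n ^ 4 + (8 * a - 64 * c) * n ^ 3 + 48 * d * n ^ 2 +
        (6 * a - 16 * c - 8) * n + 2 * d := by
  rw [deriv_eq_of_eq_quadratic (A := 16 * n ^ 4 + 24 * n ^ 2 + 1)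
    (B := (8 * a - 64 * c) * n ^ 3 + (6 * a - 16 * c - 8) * n)
    (C := Hdiag a b c 0 n) (fun t => by simp only [Hdiag]; ring)]
  ring

end PartialDerivatives

section CriticalPoint

variable (n : ℝ)

theorem c₀_eq :
    c₀ n = -(49152 * n ^ 10 + 59392 * n ^ 8 + 17088 * n ^ 6 + 1952 * n ^ 4 + 88 * n ^ 2 + 1) /
      (2 * ((4 * n ^ 2 - 1) ^ 2 *
        (6144 * n ^ 8 + 4864 * n ^ 6 + 920 * n ^ 4 + 58 * n ^ 2 + 1))) := by
  rw [c₀]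
  ring

theorem d₀_eq :
    d₀ n = -(n * (32768 * n ^ 8 + 19456 * n ^ 6 + 3328 * n ^ 4 + 196 * n ^ 2 + 3)) /
      ((4 * n ^ 2 - 1) ^ 2 * (6144 * n ^ 8 + 4864 * n ^ 6 + 920 * n ^ 4 + 58 * n ^ 2 + 1)) := by
  rw [d₀]
  ring

variable {n}

theorem critical_eqns (hn : 4 * n ^ 2 ≠ 1) :
    ((32 * a₀ n + 64 * b₀ n) * n ^ 4 + 8 * d₀ n * n ^ 3 +
      (16 * a₀ n - 4 * b₀ n - 12 * c₀ n - 8) * n ^ 2 + 6 * d₀ n * n + 2 * a₀ n - b₀ n -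
        c₀ n - 2 = 0) ∧
    ((64 * a₀ n + 512 * b₀ n) * n ^ 4 + (-4 * a₀ n + 64 * b₀ n) * n ^ 2 - a₀ n +
      2 * b₀ n = 0) ∧
    (32 * c₀ n * n ^ 4 - 64 * d₀ n * n ^ 3 + (-12 * a₀ n + 48 * c₀ n + 8) * n ^ 2 -
      16 * d₀ n * n - a₀ n + 2 * c₀ n + 2 = 0) ∧
    (32 * d₀ n * n ^ 4 + (8 * a₀ n - 64 * c₀ n) * n ^ 3 + 48 * d₀ n * n ^ 2 +
      (6 * a₀ n - 16 * c₀ n - 8) * n + 2 * d₀ n = 0) := by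
  have hD : 6144 * n ^ 8 + 4864 * n ^ 6 + 920 * n ^ 4 + 58 * n ^ 2 + 1 ≠ 0 := by positivity
  have hq : 4 * n ^ 2 - 1 ≠ 0 := sub_ne_zero.mpr hn
  rw [a₀, b₀, c₀_eq, d₀_eq]
  -- `field_simp` would renormalize `4 * n ^ 2 - 1` out of reach of `hq`
  generalize hq_def : 4 * n ^ 2 - 1 = q at hq ⊢
  field_simp
  subst hq_def
  refine ⟨?_, ?_, ?_, ?_⟩ <;> ring

end CriticalPoint

theorem diag_critical_point_general (n : ℕ) :
    let N : ℝ := (n : ℝ)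
    let a := a₀ N; let b := b₀ N; let c := c₀ N; let d := d₀ N
    deriv (fun t => Hdiag t b c d N) a = 0 ∧
    deriv (fun t => Hdiag a t c d N) b = 0 ∧
    deriv (fun t => Hdiag a b t d N) c = 0 ∧
    deriv (fun t => Hdiag a b c t N) d = 0 ∧
    (32 * a + 64 * b) * N ^ 4 + 8 * d * N ^ 3 +
      (16 * a - 4 * b - 12 * c - 8) * N ^ 2 + 6 * d * N + 2 * a - b - c - 2 = 0 ∧
    (64 * a + 512 * b) * N ^ 4 + (-4 * a + 64 * b) * N ^ 2 - a + 2 * b = 0 ∧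
    32 * c * N ^ 4 - 64 * d * N ^ 3 + (-12 * a + 48 * c + 8) * N ^ 2 -
      16 * d * N - a + 2 * c + 2 = 0 ∧
    32 * d * N ^ 4 + (8 * a - 64 * c) * N ^ 3 + 48 * d * N ^ 2 +
      (6 * a - 16 * c - 8) * N + 2 * d = 0 := by
  have hN : 4 * (n : ℝ) ^ 2 ≠ 1 := by norm_cast; omega
  intro N a b c d
  obtain ⟨ha, hb, hc, hd⟩ := critical_eqns hN
  exact ⟨(deriv_Hdiag_a a b c d N).trans ha, (deriv_Hdiag_b a b c d N).trans hb,
    (deriv_Hdiag_c a b c d N).trans hc, (deriv_Hdiag_d a b c d N).trans hd, ha, hb, hc, hd⟩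

/-- The quadruple `(a₀,b₀,c₀,d₀)` is a critical point of `H(·,·,·,·,n)`:
all four partial derivatives vanish, i.e. it solves the explicit linear system. -/
theorem diag_critical_point (n : ℕ) (hn : 1 ≤ n) :
    let N : ℝ := (n : ℝ)
    let a := a₀ N; let b := b₀ N; let c := c₀ N; let d := d₀ N
    deriv (fun t => Hdiag t b c d N) a = 0 ∧
    deriv (fun t => Hdiag a t c d N) b = 0 ∧
    deriv (fun t => Hdiag a b t d N) c = 0 ∧
    deriv (fun t => Hdiag a b c t N) d = 0 ∧
    (32 * a + 64 * b) * N ^ 4 + 8 * d * N ^ 3 +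
      (16 * a - 4 * b - 12 * c - 8) * N ^ 2 + 6 * d * N + 2 * a - b - c - 2 = 0 ∧
    (64 * a + 512 * b) * N ^ 4 + (-4 * a + 64 * b) * N ^ 2 - a + 2 * b = 0 ∧
    32 * c * N ^ 4 - 64 * d * N ^ 3 + (-12 * a + 48 * c + 8) * N ^ 2 -
      16 * d * N - a + 2 * c + 2 = 0 ∧
    32 * d * N ^ 4 + (8 * a - 64 * c) * N ^ 3 + 48 * d * N ^ 2 +
      (6 * a - 16 * c - 8) * N + 2 * d = 0 :=
  diag_critical_point_general n
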